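/- arXiv:0803.1869 — 7 statements merged into one kernel-verified Lean document; each statement's English description precedes it below -/
import Mathlib

section
/- Let γ be a positive integer, z a real number, and A a real square matrix of order 2γ−1 with the following block structure: the first γ rows consist of a left (γ×(γ−1)) block whose first γ−1 rows form z·I_{γ−1} and whose last row is zero, together with a right (γ×γ) block equal to −I_γ; the last γ−1 rows consist of a left ((γ−1)×(γ−1)) block U which is upper triangular with main-diagonal entries a_1, …, a_{γ−1}, together with a right ((γ−1)×γ) block whose first γ−1 columns form an upper triangular matrix V with main-diagonal entries b_1, …, b_{γ−1} and whose last column is arbitrary. Then det(A) = (−1)^γ · (a_1 + z·b_1)(a_2 + z·b_2) ⋯ (a_{γ−1} + z·b_{γ−1}). -/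
/-! Adding `z` times column `j + (γ - 1)` to column `j` for every `j < γ - 1` leaves the
determinant unchanged (the added columns lie to the right, so this is multiplication by a unipotent
lower triangular matrix). It turns the top rows into the rows of `-I_γ` placed in the last `γ`
columns, and the bottom-left block into an upper triangular block with diagonal `a r + z * b r`.
Rotating the rows cyclically by `γ`, an even permutation because `2γ - 1` is odd, then yields an
upper triangular matrix with diagonal `a 0 + z * b 0, …, a (γ - 2) + z * b (γ - 2), -1, …, -1`. -/

open Matrix Finset

theorem Fin.val_finRotate_pow_apply (n k : ℕ) (i : Fin n) :
    ((finRotate n ^ k) i : ℕ) = (i + k) % n := by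
  induction k with
  | zero => simp [Nat.mod_eq_of_lt i.isLt]
  | succ k ih =>
    have := i.neZero
    rw [pow_succ', Equiv.Perm.mul_apply, finRotate_apply, Fin.val_add, ih, Fin.val_one',
      ← Nat.add_mod, Nat.add_assoc]

theorem Finset.prod_range_add_ite_lt {M : Type*} [CommMonoid M] (f : ℕ → M) (c : M) (m n : ℕ) :
    ∏ k ∈ range (m + n), (if k < m then f k else c) = (∏ k ∈ range m, f k) * c ^ n := by
  rw [prod_range_add, prod_congr rfl fun k hk => if_pos (mem_range.mp hk),
    prod_congr rfl fun k _ => if_neg (Nat.not_lt.mpr (Nat.le_add_right m k)), prod_const,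
    card_range]

theorem Matrix.det_of_add_mul_col_of_lt {ι R : Type*} [Fintype ι] [LinearOrder ι] [CommRing R]
    (A : Matrix ι ι R) (p : ι → Prop) [DecidablePred p] (s : ι → ι)
    (hs : ∀ j, p j → j < s j) (c : R) :
    (of fun i j => A i j + if p j then c * A i (s j) else 0).det = A.det := by
  set N : Matrix ι ι R := of fun k j => if p j ∧ k = s j then c else 0
  have hAN : (of fun i j => A i j + if p j then c * A i (s j) else 0) = A * (1 + N) := by
    rw [Matrix.mul_add, Matrix.mul_one]
    ext i j
    by_cases hj : p j <;> simp [N, Matrix.mul_apply, hj, mul_comm]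
  have hlower : (1 + N).IsLowerTriangular := by
    intro k j hkj
    have hkj : k < j := hkj
    have : ¬ (p j ∧ k = s j) := fun h => (hs j h.1).not_gt (h.2 ▸ hkj)
    simp [N, this, hkj.ne]
  have hdiag : ∀ k, (1 + N) k k = 1 := by
    intro k
    have : ¬ (p k ∧ k = s k) := fun h => (hs k h.1).ne h.2
    simp [N, this]
  rw [hAN, det_mul, det_of_isLowerTriangular _ hlower, prod_eq_one fun k _ => hdiag k, mul_one]

theorem det_eq_of_top_rows_neg_shift_of_bottom_rows_triangular {R : Type*} [CommRing R] (γ : ℕ)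
    (d : ℕ → R) (B : Matrix (Fin (2 * γ - 1)) (Fin (2 * γ - 1)) R)
    (htop : ∀ i j : Fin (2 * γ - 1), (i : ℕ) < γ →
      B i j = if (j : ℕ) = (i : ℕ) + (γ - 1) then -1 else 0)
    (hbot : ∀ i j : Fin (2 * γ - 1), γ ≤ (i : ℕ) → (j : ℕ) ≤ (i : ℕ) - γ →
      B i j = if (j : ℕ) = (i : ℕ) - γ then d ((i : ℕ) - γ) else 0) :
    B.det = (-1) ^ γ * ∏ r ∈ range (γ - 1), d r := by
  set τ := finRotate (2 * γ - 1) ^ γ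
  have hτ_bot : ∀ k : Fin (2 * γ - 1), (k : ℕ) < γ - 1 → (τ k : ℕ) = k + γ := by
    intro k hk
    rw [Fin.val_finRotate_pow_apply, Nat.mod_eq_of_lt (by omega)]
  have hτ_top : ∀ k : Fin (2 * γ - 1), γ - 1 ≤ (k : ℕ) → (τ k : ℕ) = k - (γ - 1) := by
    intro k hk
    have := k.isLt
    rw [Fin.val_finRotate_pow_apply, Nat.mod_eq_sub_mod (by omega), Nat.mod_eq_of_lt (by omega)]
    omega
  have hsign : Equiv.Perm.sign τ = 1 := by
    rw [map_pow, sign_finRotate, show 2 * γ - 1 - 1 = 2 * (γ - 1) by omega, pow_mul, neg_one_sq,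
      one_pow, one_pow]
  have hentry : ∀ k j : Fin (2 * γ - 1), j ≤ k →
      B (τ k) j = if j = k then (if (k : ℕ) < γ - 1 then d k else -1) else 0 := by
    intro k j hjk
    have hjk : (j : ℕ) ≤ k := hjk
    by_cases hk : (k : ℕ) < γ - 1
    · have hτk := hτ_bot k hk
      rw [hbot _ _ (by omega) (by omega), if_pos hk, hτk, Nat.add_sub_cancel]
      simp only [Fin.ext_iff]
    · have hτk := hτ_top k (by omega)
      rw [htop _ _ (by omega), if_neg hk, hτk, Nat.sub_add_cancel (by omega)]
      simp only [Fin.ext_iff]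
  have htri : (B.submatrix τ id).IsUpperTriangular := fun k j hjk => by
    simp [hentry k j hjk.le, (show j < k from hjk).ne]
  calc B.det = (B.submatrix τ id).det := by simp [det_permute, hsign]
    _ = ∏ k : Fin (2 * γ - 1), if (k : ℕ) < γ - 1 then d k else -1 := by
      simp [det_of_isUpperTriangular htri, hentry]
    _ = (-1) ^ γ * ∏ r ∈ range (γ - 1), d r := by
      rw [Fin.prod_univ_eq_prod_range (fun k => if k < γ - 1 then d k else -1),
        show 2 * γ - 1 = (γ - 1) + γ by omega, prod_range_add_ite_lt, mul_comm]

theorem det_block_upper_triangular_general (γ : ℕ) (z : ℝ) (a b : ℕ → ℝ)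
    (A : Matrix (Fin (2 * γ - 1)) (Fin (2 * γ - 1)) ℝ)
    -- top-left `γ × (γ−1)` block: first `γ−1` rows form `z·I_{γ−1}`, last row is zero
    (htl : ∀ i j : Fin (2 * γ - 1), (i : ℕ) < γ → (j : ℕ) < γ - 1 →
      A i j = if (i : ℕ) = (j : ℕ) then z else 0)
    -- top-right `γ × γ` block: `−I_γ`
    (htr : ∀ i j : Fin (2 * γ - 1), (i : ℕ) < γ → γ - 1 ≤ (j : ℕ) →
      A i j = if (j : ℕ) = (i : ℕ) + (γ - 1) then -1 else 0)
    -- bottom-left `(γ−1) × (γ−1)` block: upper triangular with diagonal `a`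
    (hbl : ∀ i j : Fin (2 * γ - 1), γ ≤ (i : ℕ) → (j : ℕ) < γ - 1 →
      (j : ℕ) ≤ (i : ℕ) - γ →
      A i j = if (j : ℕ) = (i : ℕ) - γ then a ((i : ℕ) - γ) else 0)
    -- bottom-right `(γ−1) × γ` block: first `γ−1` columns upper triangular with diagonal
    -- `b` (the last column, with `(j : ℕ) = 2γ − 2`, is arbitrary)
    (hbr : ∀ i j : Fin (2 * γ - 1), γ ≤ (i : ℕ) → γ - 1 ≤ (j : ℕ) →
      (j : ℕ) < 2 * γ - 2 → (j : ℕ) - (γ - 1) ≤ (i : ℕ) - γ →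
      A i j = if (j : ℕ) - (γ - 1) = (i : ℕ) - γ then b ((i : ℕ) - γ) else 0) :
    A.det = (-1 : ℝ) ^ γ * ∏ r ∈ Finset.range (γ - 1), (a r + z * b r) := by
  -- a total map agreeing with `j ↦ j + (γ - 1)` on the columns `j < γ - 1` that are modified
  set s := finRotate (2 * γ - 1) ^ (γ - 1)
  have hs : ∀ j : Fin (2 * γ - 1), (j : ℕ) < γ - 1 → (s j : ℕ) = j + (γ - 1) := fun j hj => by
    rw [Fin.val_finRotate_pow_apply, Nat.mod_eq_of_lt (by omega)]
  rw [← det_of_add_mul_col_of_lt A (fun j => (j : ℕ) < γ - 1) s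
    (fun j hj => Fin.lt_def.mpr (by rw [hs j hj]; omega)) z]
  apply det_eq_of_top_rows_neg_shift_of_bottom_rows_triangular
  · intro i j hi
    by_cases hj : (j : ℕ) < γ - 1
    · have hsj := hs j hj
      rw [of_apply, if_pos hj, htl i j hi hj, htr i (s j) hi (by omega), hsj,
        if_neg (show ¬(j : ℕ) = i + (γ - 1) by omega)]
      by_cases hij : (i : ℕ) = j
      · rw [if_pos hij, if_pos (by omega)]; ring
      · rw [if_neg hij, if_neg (by omega)]; ring
    · rw [of_apply, if_neg hj, htr i j hi (by omega), add_zero]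
  · intro i j hi hji
    have := i.isLt
    have hj : (j : ℕ) < γ - 1 := by omega
    have hsj := hs j hj
    simp only [of_apply, if_pos hj]
    rw [hbl i j hi hj hji, hbr i (s j) hi (by omega) (by omega) (by omega), hsj,
      Nat.add_sub_cancel]
    split_ifs <;> ring

/-- **Lemma 2.**  Let `γ` be a positive integer, `z` a real number and `A` a real square
matrix of order `2γ − 1` with the following block structure: the first `γ` rows consist of a
left `γ × (γ−1)` block whose first `γ−1` rows form `z·I_{γ−1}` and whose last row is zero,
together with a right `γ × γ` block equal to `−I_γ`; the last `γ−1` rows consist of a left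
`(γ−1) × (γ−1)` upper triangular block with main-diagonal entries `a 0, …, a (γ−2)`,
together with a right `(γ−1) × γ` block whose first `γ−1` columns form an upper triangular
matrix with main-diagonal entries `b 0, …, b (γ−2)` and whose last column is arbitrary.
Then `det A = (−1)^γ · ∏ r, (a r + z · b r)`. -/
theorem det_block_upper_triangular (γ : ℕ) (hγ : 0 < γ) (z : ℝ) (a b : ℕ → ℝ)
    (A : Matrix (Fin (2 * γ - 1)) (Fin (2 * γ - 1)) ℝ)
    -- top-left `γ × (γ−1)` block: first `γ−1` rows form `z·I_{γ−1}`, last row is zero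
    (htl : ∀ i j : Fin (2 * γ - 1), (i : ℕ) < γ → (j : ℕ) < γ - 1 →
      A i j = if (i : ℕ) = (j : ℕ) then z else 0)
    -- top-right `γ × γ` block: `−I_γ`
    (htr : ∀ i j : Fin (2 * γ - 1), (i : ℕ) < γ → γ - 1 ≤ (j : ℕ) →
      A i j = if (j : ℕ) = (i : ℕ) + (γ - 1) then -1 else 0)
    -- bottom-left `(γ−1) × (γ−1)` block: upper triangular with diagonal `a`
    (hbl : ∀ i j : Fin (2 * γ - 1), γ ≤ (i : ℕ) → (j : ℕ) < γ - 1 →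
      (j : ℕ) ≤ (i : ℕ) - γ →
      A i j = if (j : ℕ) = (i : ℕ) - γ then a ((i : ℕ) - γ) else 0)
    -- bottom-right `(γ−1) × γ` block: first `γ−1` columns upper triangular with diagonal
    -- `b` (the last column, with `(j : ℕ) = 2γ − 2`, is arbitrary)
    (hbr : ∀ i j : Fin (2 * γ - 1), γ ≤ (i : ℕ) → γ - 1 ≤ (j : ℕ) →
      (j : ℕ) < 2 * γ - 2 → (j : ℕ) - (γ - 1) ≤ (i : ℕ) - γ →
      A i j = if (j : ℕ) - (γ - 1) = (i : ℕ) - γ then b ((i : ℕ) - γ) else 0) :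
    A.det = (-1 : ℝ) ^ γ * ∏ r ∈ Finset.range (γ - 1), (a r + z * b r) :=
  det_block_upper_triangular_general γ z a b A htl htr hbl hbr
end

section
/- For every integer N ≥ 2, every choice of masses m_1, …, m_N > 0, spring constants k_1, …, k_{N−1} and dashpot constants c_1, …, c_{N−1}, the adjoint polynomial satisfies, as polynomials in z: h_N · adj(z·I_{2N} − F_N) · g_N = (k_1 + z·c_1)(k_2 + z·c_2) ⋯ (k_{N−1} + z·c_{N−1}) / (m_1·m_2 ⋯ m_N). -/
open Polynomial

/-- The `N × N` tridiagonal matrix `X(x_1, …, x_{N−1})` of the spring–dashpot–mass chain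
(0-based indexing: `ms i` is the mass `m_{i+1}` and `xs i` is the parameter `x_{i+1}`):
diagonal entries `(x_{i−1} + x_i)/m_i` (with the convention `x_0 = x_N = 0`),
superdiagonal entries `−x_i/m_i` and subdiagonal entries `−x_i/m_{i+1}`. -/
noncomputable def chainX (N : ℕ) (ms xs : ℕ → ℝ) : Matrix (Fin N) (Fin N) ℝ :=
  Matrix.of fun i j =>
    if i = j then
      ((if (i : ℕ) = 0 then 0 else xs ((i : ℕ) - 1)) +
        (if (i : ℕ) = N - 1 then 0 else xs (i : ℕ))) / ms (i : ℕ)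
    else if (j : ℕ) = (i : ℕ) + 1 then -xs (i : ℕ) / ms (i : ℕ)
    else if (i : ℕ) = (j : ℕ) + 1 then -xs (j : ℕ) / ms (i : ℕ)
    else 0

/-- The `2N × 2N` state matrix `F_N = [[O_N, I_N], [−K_N, −C_N]]` of the chain, where
`K_N = X(k_1, …, k_{N−1})` and `C_N = X(c_1, …, c_{N−1})`. -/
noncomputable def chainF (N : ℕ) (ms ks cs : ℕ → ℝ) :
    Matrix (Fin N ⊕ Fin N) (Fin N ⊕ Fin N) ℝ :=
  Matrix.fromBlocks 0 1 (-(chainX N ms ks)) (-(chainX N ms cs))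

/-- The output row vector `h_N` (entry `1` in position `N`, zeros elsewhere), with
polynomial entries. -/
noncomputable def chainH (N : ℕ) : (Fin N ⊕ Fin N) → Polynomial ℝ
  | Sum.inl i => if (i : ℕ) = N - 1 then 1 else 0
  | Sum.inr _ => 0

/-- The input column vector `g_N` (entry `1/m_1` in position `N+1`, zeros elsewhere), with
polynomial entries. -/
noncomputable def chainG (N : ℕ) (ms : ℕ → ℝ) : (Fin N ⊕ Fin N) → Polynomial ℝ
  | Sum.inl _ => 0
  | Sum.inr i => if (i : ℕ) = 0 then Polynomial.C (1 / ms 0) else 0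

/-- The adjoint polynomial `h_N · adj(z·I_{2N} − F_N) · g_N`. -/
noncomputable def adjPoly (N : ℕ) (ms ks cs : ℕ → ℝ) : Polynomial ℝ :=
  ∑ i, ∑ j, chainH N i * (Matrix.charmatrix (chainF N ms ks cs)).adjugate i j * chainG N ms j

/-! By the cofactor formula, the entry of `adj(z I − F)` in row `N` and column `N + 1` is the
determinant of `z I − F` with row `N + 1` replaced by the unit vector `e_N`. Since the upper right
block of `z I − F` is `−I`, block column operations reduce this `2N × 2N` determinant to the
`N × N` determinant of the quadratic pencil `z² I + z C + K` with its first row replaced by `e_N`.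
The pencil is tridiagonal, so expanding along that row leaves an upper triangular minor whose
diagonal is the subdiagonal of the pencil, `−(k_i + z c_i)/m_{i+1}`. -/

namespace Matrix

variable {R : Type*} [CommRing R]

theorem det_fromBlocks_zero_neg_one_one_zero {n : Type*} [Fintype n] [DecidableEq n] :
    (fromBlocks 0 (-1) 1 0 : Matrix (n ⊕ n) (n ⊕ n) R).det = 1 := by
  have shears : (fromBlocks 0 (-1) 1 0 : Matrix (n ⊕ n) (n ⊕ n) R) =
      fromBlocks 1 (-1) 0 1 * fromBlocks 1 0 1 1 * fromBlocks 1 (-1) 0 1 := by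
    simp [fromBlocks_multiply]
  simp [shears]

theorem det_fromBlocks_scalar_neg_one {n : Type*} [Fintype n] [DecidableEq n]
    (z : R) (L D : Matrix n n R) :
    (fromBlocks (scalar n z) (-1) L D).det = (L + z • D).det := by
  have factor : fromBlocks (scalar n z) (-1) L D =
      fromBlocks 1 0 (-D) (L + z • D) * fromBlocks 1 (scalar n z) 0 1 *
        fromBlocks 0 (-1) 1 0 := by
    simp [fromBlocks_multiply, smul_eq_mul_diagonal]
  rw [factor]
  simp [det_fromBlocks_zero_neg_one_one_zero]

theorem det_updateRow_zero_single_last {n : ℕ} (M : Matrix (Fin (n + 1)) (Fin (n + 1)) R)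
    (hM : ∀ i j : Fin (n + 1), (j : ℕ) + 1 < i → M i j = 0) :
    (M.updateRow 0 (Pi.single (Fin.last n) 1)).det =
      (-1) ^ n * ∏ i : Fin n, M i.succ i.castSucc := by
  rw [det_succ_row_zero, Finset.sum_eq_single (Fin.last n)]
  · have hminor : (M.updateRow 0 (Pi.single (Fin.last n) 1)).submatrix Fin.succ Fin.castSucc =
        M.submatrix Fin.succ Fin.castSucc := by
      ext i j; simp
    have htri : (M.submatrix Fin.succ Fin.castSucc).BlockTriangular id := fun i j hij =>
      hM _ _ (by simpa using hij)
    simp [hminor, det_of_isUpperTriangular htri]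
  · intro j _ hj
    simp [hj]
  · simp

theorem fromBlocks_updateRow_inr {m n α : Type*} [DecidableEq m] [DecidableEq n]
    (A : Matrix m m α) (B : Matrix m n α) (C : Matrix n m α) (D : Matrix n n α) (i : n)
    (w : m ⊕ n → α) :
    (fromBlocks A B C D).updateRow (Sum.inr i) w =
      fromBlocks A B (C.updateRow i (w ∘ Sum.inl)) (D.updateRow i (w ∘ Sum.inr)) := by
  ext (a | a) (b | b) <;> simp [updateRow_apply]

end Matrix

open Matrix

theorem chainX_apply_eq_zero_of_succ_lt {N : ℕ} (ms xs : ℕ → ℝ) {i j : Fin N}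
    (h : (j : ℕ) + 1 < i) : chainX N ms xs i j = 0 := by
  rw [chainX, of_apply, if_neg (by omega), if_neg (by omega), if_neg (by omega)]

theorem chainX_succ_castSucc {n : ℕ} (ms xs : ℕ → ℝ) (i : Fin n) :
    chainX (n + 1) ms xs i.succ i.castSucc = -xs i / ms (i + 1) := by
  rw [chainX, of_apply, if_neg (by simp [Fin.ext_iff]), if_neg (by simp; omega), if_pos (by simp)]
  simp

theorem charmatrix_chainF (N : ℕ) (ms ks cs : ℕ → ℝ) :
    charmatrix (chainF N ms ks cs) =
      fromBlocks (scalar _ X) (-1) ((chainX N ms ks).map C)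
        (scalar _ X + (chainX N ms cs).map C) := by
  rw [chainF, charmatrix_fromBlocks, charmatrix_zero]
  congr 1 <;> refine Matrix.ext fun i j => ?_ <;> simp [charmatrix_apply, sub_eq_add_neg]

theorem adjPoly_eq_adjugate_mul (n : ℕ) (ms ks cs : ℕ → ℝ) :
    adjPoly (n + 1) ms ks cs =
      (charmatrix (chainF (n + 1) ms ks cs)).adjugate (Sum.inl (Fin.last n)) (Sum.inr 0) *
        C (1 / ms 0) := by
  have hlast (i : Fin (n + 1)) : (i : ℕ) = n + 1 - 1 ↔ i = Fin.last n := by simp [Fin.ext_iff]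
  have hzero (j : Fin (n + 1)) : (j : ℕ) = 0 ↔ j = 0 := Fin.val_eq_zero_iff
  simp only [adjPoly, Fintype.sum_sum_type, chainH, chainG, hlast, hzero, mul_zero, zero_mul,
    Finset.sum_const_zero, add_zero, zero_add, ite_mul, one_mul, mul_ite, Finset.sum_ite_eq',
    Finset.mem_univ, if_true]

noncomputable def chainPencil (N : ℕ) (ms ks cs : ℕ → ℝ) : Matrix (Fin N) (Fin N) ℝ[X] :=
  (chainX N ms ks).map C + (X : ℝ[X]) • (scalar (Fin N) X + (chainX N ms cs).map C)

theorem chainPencil_apply_eq_zero_of_succ_lt {N : ℕ} (ms ks cs : ℕ → ℝ) {i j : Fin N}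
    (h : (j : ℕ) + 1 < i) : chainPencil N ms ks cs i j = 0 := by
  have hij : i ≠ j := by rintro rfl; omega
  simp [chainPencil, chainX_apply_eq_zero_of_succ_lt _ _ h, hij]

theorem chainPencil_succ_castSucc {n : ℕ} (ms ks cs : ℕ → ℝ) (i : Fin n) :
    chainPencil (n + 1) ms ks cs i.succ i.castSucc =
      -((C (ks i) + X * C (cs i)) * C (1 / ms (i + 1))) := by
  simp [chainPencil, chainX_succ_castSucc, Fin.ext_iff, div_eq_mul_inv]
  ring

theorem adjugate_charmatrix_chainF (n : ℕ) (ms ks cs : ℕ → ℝ) :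
    (charmatrix (chainF (n + 1) ms ks cs)).adjugate (Sum.inl (Fin.last n)) (Sum.inr 0) =
      (-1) ^ n * ∏ i : Fin n, chainPencil (n + 1) ms ks cs i.succ i.castSucc := by
  have hinl : Pi.single (Sum.inl (Fin.last n) : Fin (n + 1) ⊕ Fin (n + 1)) (1 : ℝ[X]) ∘
      Sum.inl = Pi.single (Fin.last n) 1 := by
    funext j; simp [Pi.single_apply]
  have hinr : Pi.single (Sum.inl (Fin.last n) : Fin (n + 1) ⊕ Fin (n + 1)) (1 : ℝ[X]) ∘
      Sum.inr = 0 := by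
    funext j; simp
  have hrow : ((chainX (n + 1) ms ks).map C).updateRow 0 (Pi.single (Fin.last n) 1) +
      (X : ℝ[X]) • ((scalar (Fin (n + 1)) X + (chainX (n + 1) ms cs).map C).updateRow 0 0) =
      (chainPencil (n + 1) ms ks cs).updateRow 0 (Pi.single (Fin.last n) 1) := by
    ext i j : 1
    rcases eq_or_ne i 0 with rfl | hi
    · simp
    · simp [hi, chainPencil, mul_add]
  rw [adjugate_apply, charmatrix_chainF, fromBlocks_updateRow_inr, hinl, hinr,
    det_fromBlocks_scalar_neg_one, hrow,
    det_updateRow_zero_single_last _ fun i j h => chainPencil_apply_eq_zero_of_succ_lt ms ks cs h]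

theorem adjPoly_eq_general (N : ℕ) (hN : 2 ≤ N) (ms ks cs : ℕ → ℝ) :
    adjPoly N ms ks cs =
      (∏ i ∈ Finset.range (N - 1), (Polynomial.C (ks i) + Polynomial.X * Polynomial.C (cs i))) *
        Polynomial.C (1 / ∏ i ∈ Finset.range N, ms i) := by
  obtain ⟨n, rfl⟩ : ∃ n, N = n + 1 := ⟨N - 1, by omega⟩
  rw [adjPoly_eq_adjugate_mul, adjugate_charmatrix_chainF]
  simp only [chainPencil_succ_castSucc, Finset.prod_neg, Finset.card_univ, Fintype.card_fin,
    ← mul_assoc, ← mul_pow, neg_one_mul, neg_neg, one_pow, one_mul, Finset.prod_mul_distrib,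
    ← map_prod, Nat.add_sub_cancel]
  rw [mul_assoc, ← map_mul, Fin.prod_univ_eq_prod_range (fun i => C (ks i) + X * C (cs i)),
    Fin.prod_univ_eq_prod_range (fun i => 1 / ms (i + 1)), Finset.prod_range_succ' ms]
  simp only [one_div, Finset.prod_inv_distrib, mul_inv]

/-- **Theorem 3.1 (form of the adjoint polynomial).**  For every integer `N ≥ 2`, every
choice of masses `m_1, …, m_N > 0` and of spring constants `k_1, …, k_{N−1}` and dashpot
constants `c_1, …, c_{N−1}` (0-based: `ms i = m_{i+1}`, `ks i = k_{i+1}`, `cs i = c_{i+1}`),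
one has, as polynomials in `z`,
`h_N · adj(z·I_{2N} − F_N) · g_N = (k_1 + z c_1) ⋯ (k_{N−1} + z c_{N−1}) / (m_1 ⋯ m_N)`. -/
theorem adjPoly_eq (N : ℕ) (hN : 2 ≤ N) (ms ks cs : ℕ → ℝ)
    (hm : ∀ i < N, 0 < ms i) :
    adjPoly N ms ks cs =
      (∏ i ∈ Finset.range (N - 1), (Polynomial.C (ks i) + Polynomial.X * Polynomial.C (cs i))) *
        Polynomial.C (1 / ∏ i ∈ Finset.range N, ms i) :=
  adjPoly_eq_general N hN ms ks cs
end

section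
/- Fix masses m_1, m_2, … > 0, spring constants k_1, k_2, … and dashpot constants c_1, c_2, …, and set b_i(z) = z·c_i + k_i. Define polynomials inductively by P_1(z) = z², D_0(z) = 1, D_j(z) = P_j(z) + (b_j(z)/m_j)·D_{j−1}(z) for j ≥ 1, and P_j(z) = (z² + b_{j−1}(z)/m_j)·P_{j−1}(z) + z²·(b_{j−1}(z)/m_{j−1})·D_{j−2}(z) for j ≥ 2. Then for every N ≥ 1, P_N(z) equals the characteristic polynomial det(z·I_{2N} − F_N) of the matrix F_N. -/
open Polynomial

/-- The pair `(P_n, D_n)` of polynomials of Theorem 4.1, defined inductively by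
`P_1(z) = z²`, `D_0(z) = 1`, `D_j = P_j + (b_j/m_j)·D_{j−1}` for `j ≥ 1`, and
`P_j = (z² + b_{j−1}/m_j)·P_{j−1} + z²·(b_{j−1}/m_{j−1})·D_{j−2}` for `j ≥ 2`, where
`b_i(z) = z·c_i + k_i` (0-based data: `ms i = m_{i+1}`, `ks i = k_{i+1}`, `cs i = c_{i+1}`,
so `b_{i+1}(z)` is `X·C(cs i) + C(ks i)`; the unused value `P_0` is set to `0`). -/
noncomputable def chainPD (ms ks cs : ℕ → ℝ) : ℕ → Polynomial ℝ × Polynomial ℝ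
  | 0 => (0, 1)
  | 1 =>
    (Polynomial.X ^ 2,
      Polynomial.X ^ 2 +
        Polynomial.C (1 / ms 0) * (Polynomial.X * Polynomial.C (cs 0) + Polynomial.C (ks 0)) * 1)
  | (n + 2) =>
    let b : ℕ → Polynomial ℝ := fun i => Polynomial.X * Polynomial.C (cs i) + Polynomial.C (ks i)
    let P : Polynomial ℝ :=
      (Polynomial.X ^ 2 + Polynomial.C (1 / ms (n + 1)) * b n) * (chainPD ms ks cs (n + 1)).1 +
        Polynomial.X ^ 2 * Polynomial.C (1 / ms n) * b n * (chainPD ms ks cs n).2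
    (P, P + Polynomial.C (1 / ms (n + 1)) * b (n + 1) * (chainPD ms ks cs (n + 1)).2)

/-! Eliminating the velocity block of `z·I − F_N` gives `det(z·I − F_N) = det(z²·I + z·C_N + K_N)`.
For an unbounded chain this quadratic pencil is tridiagonal with diagonal entries
`z² + (b_{i−1} + b_i)/m_i` and off-diagonal entries `−b_i/m_i`, `−b_i/m_{i+1}`; Laplace expansion
along the last row shows that its leading principal minors satisfy the recurrence of the `D_n`.
The pencil of the `N`-chain differs from the `N`-th minor only in its last diagonal entry, which
lacks `b_N/m_N`, and since the determinant is affine in that entry it equals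
`D_N − (b_N/m_N)·D_{N−1} = P_N`. -/

namespace Matrix

variable {R : Type*} [CommRing R]

def tridiagonal (d u l : ℕ → R) (n : ℕ) : Matrix (Fin n) (Fin n) R :=
  of fun i j =>
    if (i : ℕ) = j then d i else if (j : ℕ) = i + 1 then u i else if (i : ℕ) = j + 1 then l j
    else 0

variable (d u l : ℕ → R)

theorem tridiagonal_apply_eq_zero {n : ℕ} {i j : Fin n} (h : (i : ℕ) + 1 < j ∨ (j : ℕ) + 1 < i) :
    tridiagonal d u l n i j = 0 := by
  simp only [tridiagonal, of_apply]
  rw [if_neg, if_neg, if_neg] <;> omega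

@[simp]
theorem tridiagonal_submatrix_castSucc (n : ℕ) :
    (tridiagonal d u l (n + 1)).submatrix Fin.castSucc Fin.castSucc = tridiagonal d u l n := by
  ext i j
  simp [tridiagonal]

theorem det_tridiagonal_succ_succ (n : ℕ) :
    (tridiagonal d u l (n + 2)).det =
      d (n + 1) * (tridiagonal d u l (n + 1)).det - u n * l n * (tridiagonal d u l n).det := by
  have hd : tridiagonal d u l (n + 2) (Fin.last _) (Fin.last _) = d (n + 1) := by
    simp [tridiagonal]
  have hl : tridiagonal d u l (n + 2) (Fin.last _) (Fin.last n).castSucc = l n := by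
    simp [tridiagonal]
    omega
  have hu : tridiagonal d u l (n + 2) (Fin.last n).castSucc (Fin.last _) = u n := by
    simp [tridiagonal]
  have hcol : (Fin.last n).castSucc.succAbove (Fin.last n) = Fin.last (n + 1) := by
    simp [Fin.succAbove_of_le_castSucc]
  -- the minor of the subdiagonal entry `l n` has a single nonzero entry `u n` in its last column
  have hminor : ((tridiagonal d u l (n + 2)).submatrix Fin.castSucc
      (Fin.last n).castSucc.succAbove).det = u n * (tridiagonal d u l n).det := by
    rw [det_succ_column _ (Fin.last _), Fin.sum_univ_castSucc, Finset.sum_eq_zero fun i _ => by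
      rw [submatrix_apply, hcol, tridiagonal_apply_eq_zero _ _ _ (by simp), mul_zero,
        zero_mul]]
    have hsub : ((tridiagonal d u l (n + 2)).submatrix Fin.castSucc
        (Fin.last n).castSucc.succAbove).submatrix Fin.castSucc Fin.castSucc =
        tridiagonal d u l n := by
      ext i j
      simp [tridiagonal, Fin.succAbove_of_castSucc_lt, Fin.lt_def]
    rw [zero_add, Fin.succAbove_last, hsub, submatrix_apply, hcol, hu]
    simp [← two_mul, pow_mul]
  rw [det_succ_row _ (Fin.last _), Fin.sum_univ_castSucc, Fin.sum_univ_castSucc,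
    Finset.sum_eq_zero fun j _ => by
      rw [tridiagonal_apply_eq_zero _ _ _ (by simp), mul_zero, zero_mul]]
  rw [zero_add, hd, hl, Fin.succAbove_last, hminor, tridiagonal_submatrix_castSucc]
  simp [← two_mul, pow_mul]
  ring

theorem tridiagonal_update_of_le {m n : ℕ} (h : n ≤ m) (β : R) :
    tridiagonal (Function.update d m β) u l n = tridiagonal d u l n := by
  ext i j
  have : (i : ℕ) ≠ m := by omega
  simp [tridiagonal, this]

theorem det_tridiagonal_update_last (n : ℕ) (β : R) :
    (tridiagonal (Function.update d n β) u l (n + 1)).det =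
      (tridiagonal d u l (n + 1)).det + (β - d n) * (tridiagonal d u l n).det := by
  cases n with
  | zero => simp [tridiagonal]
  | succ n =>
    rw [det_tridiagonal_succ_succ, det_tridiagonal_succ_succ d, Function.update_self,
      tridiagonal_update_of_le _ _ _ le_rfl, tridiagonal_update_of_le _ _ _ n.le_succ]
    ring

theorem det_fromBlocks_neg_one₁₂ {m : Type*} [DecidableEq m] [Fintype m]
    (A C D : Matrix m m R) : (fromBlocks A (-1) C D).det = (C + D * A).det := by
  have h : fromBlocks A (-1) C D =
      fromBlocks 1 (-1) (C - D + D * A) D * fromBlocks 1 0 (1 - A) 1 := by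
    rw [fromBlocks_multiply]
    congr 1 <;> noncomm_ring
  rw [h, det_mul, det_fromBlocks_one₁₁, det_fromBlocks_zero₁₂]
  simp only [det_one, mul_one]
  congr 1
  noncomm_ring

end Matrix

open Matrix

section Chain

variable (ms ks cs : ℕ → ℝ)

noncomputable def chainB (i : ℕ) : ℝ[X] := X * C (cs i) + C (ks i)

-- Entries of `z²·I + z·C + K` for an unbounded chain, i.e. without the convention `x_N = 0`.
noncomputable def chainDiag (i : ℕ) : ℝ[X] :=
  X ^ 2 + C (1 / ms i) * ((if i = 0 then 0 else chainB ks cs (i - 1)) + chainB ks cs i)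

noncomputable def chainUpper (i : ℕ) : ℝ[X] := -(C (1 / ms i) * chainB ks cs i)

noncomputable def chainLower (i : ℕ) : ℝ[X] := -(C (1 / ms (i + 1)) * chainB ks cs i)

theorem charpoly_chainF (N : ℕ) :
    (chainF N ms ks cs).charpoly =
      (tridiagonal (Function.update (chainDiag ms ks cs) (N - 1)
        (chainDiag ms ks cs (N - 1) - C (1 / ms (N - 1)) * chainB ks cs (N - 1)))
        (chainUpper ms ks cs) (chainLower ms ks cs) N).det := by
  rw [charpoly, chainF, charmatrix_fromBlocks, charmatrix_zero, Matrix.map_one _ C_0 C_1,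
    Matrix.map_neg _ fun _ => C_neg, neg_neg, det_fromBlocks_neg_one₁₂]
  congr 1
  ext i j : 1
  simp only [Matrix.add_apply, map_apply, scalar_apply, mul_diagonal, charmatrix_apply,
    Matrix.neg_apply, diagonal_apply, chainX, tridiagonal, of_apply, Function.update_apply,
    chainDiag, chainUpper, chainLower, chainB, Fin.ext_iff]
  split_ifs <;> simp_all [div_eq_mul_inv, C_mul, C_add, C_neg] <;> ring

theorem chainPD_fst_succ (n : ℕ) :
    (chainPD ms ks cs (n + 1)).1 =
      (chainPD ms ks cs (n + 1)).2 - C (1 / ms n) * chainB ks cs n * (chainPD ms ks cs n).2 := by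
  cases n <;> simp only [chainPD, chainB] <;> ring

theorem chainPD_snd_succ_succ (n : ℕ) :
    (chainPD ms ks cs (n + 2)).2 = chainDiag ms ks cs (n + 1) * (chainPD ms ks cs (n + 1)).2 -
      chainUpper ms ks cs n * chainLower ms ks cs n * (chainPD ms ks cs n).2 := by
  have h := chainPD_fst_succ ms ks cs n
  simp only [chainPD, chainB, chainDiag, chainUpper, chainLower] at h ⊢
  rw [h]
  simp only [n.succ_ne_zero, if_false, Nat.add_sub_cancel]
  ring

theorem chainPD_snd_eq_det (n : ℕ) :
    (chainPD ms ks cs n).2 =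
      (tridiagonal (chainDiag ms ks cs) (chainUpper ms ks cs) (chainLower ms ks cs) n).det := by
  induction n using Nat.twoStepInduction with
  | zero => simp [chainPD]
  | one => simp [chainPD, tridiagonal, chainDiag, chainB]
  | more n ih₀ ih₁ => rw [chainPD_snd_succ_succ, det_tridiagonal_succ_succ, ih₀, ih₁]

end Chain

theorem chainPD_fst_eq_charpoly_general (ms ks cs : ℕ → ℝ)
    (N : ℕ) (hN : 1 ≤ N) :
    (chainPD ms ks cs N).1 = Matrix.charpoly (chainF N ms ks cs) := by
  obtain ⟨n, rfl⟩ := Nat.exists_eq_add_of_le' hN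
  rw [charpoly_chainF, Nat.add_sub_cancel, det_tridiagonal_update_last, ← chainPD_snd_eq_det,
    ← chainPD_snd_eq_det, chainPD_fst_succ]
  ring

/-- **Theorem 4.1 (inductive form of the characteristic polynomial).**  For all masses
`m_1, m_2, … > 0`, spring constants `k_1, k_2, …` and dashpot constants `c_1, c_2, …`, the
inductively defined polynomial `P_N` equals the characteristic polynomial
`det(z·I_{2N} − F_N)` of `F_N`, for every `N ≥ 1`. -/
theorem chainPD_fst_eq_charpoly (ms ks cs : ℕ → ℝ) (hm : ∀ i, 0 < ms i)
    (N : ℕ) (hN : 1 ≤ N) :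
    (chainPD ms ks cs N).1 = Matrix.charpoly (chainF N ms ks cs) :=
  chainPD_fst_eq_charpoly_general ms ks cs N hN
end

section
/- For N = 2 and any masses m_1, m_2 > 0, spring constant k_1 > 0 and dashpot constant c_1 ≥ 0, the characteristic polynomial P_2(z) = det(z·I_4 − F_2) and the adjoint polynomial Q_2(z) = h_2 · adj(z·I_4 − F_2) · g_2 = (k_1 + z·c_1)/(m_1m_2) have no common complex root. -/
open Polynomial

/-!
Ordering the state as `(x₁, x₂, v₁, v₂)`, the cofactor expansions give
`P₂(z) = z² (z² + (1/m₁ + 1/m₂)(k₁ + c₁ z))` and `Q₂(z) = (k₁ + c₁ z)/(m₁ m₂)`.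
At a common root `k₁ + c₁ z` vanishes, hence so does `z⁴`; then `z = 0` forces `k₁ = 0`.
-/

open Matrix

lemma chainX_two (ms xs : ℕ → ℝ) :
    chainX 2 ms xs = !![xs 0 / ms 0, -xs 0 / ms 0; -xs 0 / ms 1, xs 0 / ms 1] := by
  ext i j
  fin_cases i <;> fin_cases j <;> simp [chainX, neg_div]

lemma reindex_chainF_two (ms ks cs : ℕ → ℝ) :
    reindex finSumFinEquiv finSumFinEquiv (chainF 2 ms ks cs) =
      !![0, 0, 1, 0;
         0, 0, 0, 1;
         -(ks 0 / ms 0), ks 0 / ms 0, -(cs 0 / ms 0), cs 0 / ms 0;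
         ks 0 / ms 1, -(ks 0 / ms 1), cs 0 / ms 1, -(cs 0 / ms 1)] := by
  ext i j
  fin_cases i <;> fin_cases j <;> simp [chainF, chainX_two, finSumFinEquiv, Fin.addCases, neg_div]

section TwoMass

variable {R : Type*} [CommRing R] (a b c d : R)

lemma charpoly_twoMass :
    charpoly !![0, 0, 1, 0; 0, 0, 0, 1; -a, a, -b, b; c, -c, d, -d] =
      X ^ 2 * (X ^ 2 + C (b + d) * X + C (a + c)) := by
  rw [charpoly, det_succ_row_zero]
  simp [Fin.sum_univ_succ, det_fin_three, charmatrix_apply, Fin.succAbove]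
  ring

lemma adjugate_charmatrix_twoMass :
    (charmatrix !![0, 0, 1, 0; 0, 0, 0, 1; -a, a, -b, b; c, -c, d, -d]).adjugate 1 2 =
      C c + C d * X := by
  rw [adjugate_fin_succ_eq_det_submatrix, det_fin_three]
  simp [Fin.succAbove]
  ring

end TwoMass

lemma charpoly_chainF_two (ms ks cs : ℕ → ℝ) :
    (chainF 2 ms ks cs).charpoly =
      X ^ 2 * (X ^ 2 + (C (ks 0) + C (cs 0) * X) * C (1 / ms 0 + 1 / ms 1)) := by
  rw [← charpoly_reindex finSumFinEquiv, reindex_chainF_two, charpoly_twoMass]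
  simp only [div_eq_mul_inv, one_mul, map_add, map_mul]
  ring

lemma adjPoly_two (ms ks cs : ℕ → ℝ) :
    adjPoly 2 ms ks cs = (C (ks 0) + C (cs 0) * X) * C (1 / (ms 0 * ms 1)) := by
  have hentry : (chainF 2 ms ks cs).charmatrix.adjugate (Sum.inl 1) (Sum.inr 0) =
      C (ks 0 / ms 1) + C (cs 0 / ms 1) * X := by
    rw [← adjugate_charmatrix_twoMass (ks 0 / ms 0) (cs 0 / ms 0), ← reindex_chainF_two,
      charmatrix_reindex, adjugate_reindex]
    rfl
  have hsum : adjPoly 2 ms ks cs =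
      (chainF 2 ms ks cs).charmatrix.adjugate (Sum.inl 1) (Sum.inr 0) * C (1 / ms 0) := by
    simp [adjPoly, Fintype.sum_sum_type, chainH, chainG]
  rw [hsum, hentry]
  simp only [div_eq_mul_inv, one_mul, mul_inv, map_mul]
  ring

theorem no_common_root_two_general (ms ks cs : ℕ → ℝ)
    (hm1 : 0 < ms 0) (hm2 : 0 < ms 1) (hk : 0 < ks 0) :
    ¬ ∃ w : ℂ,
        Polynomial.aeval w (Matrix.charpoly (chainF 2 ms ks cs)) = 0 ∧
        Polynomial.aeval w (adjPoly 2 ms ks cs) = 0 := by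
  rintro ⟨w, hP, hQ⟩
  rw [charpoly_chainF_two] at hP
  rw [adjPoly_two] at hQ
  have hL : (ks 0 : ℂ) + cs 0 * w = 0 := by
    simpa [hm1.ne', hm2.ne'] using hQ
  have hw : w = 0 := by
    simpa [hL] using hP
  simp [hw, hk.ne'] at hL

/-- **Theorem 5.1.**  For `N = 2`, any masses `m_1, m_2 > 0`, spring constant `k_1 > 0` and
dashpot constant `c_1 ≥ 0` (0-based: `ms 0 = m_1`, `ms 1 = m_2`, `ks 0 = k_1`,
`cs 0 = c_1`), the characteristic polynomial `P_2(z) = det(z·I_4 − F_2)` and the adjoint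
polynomial `Q_2(z) = h_2 · adj(z·I_4 − F_2) · g_2` have no common complex root. -/
theorem no_common_root_two (ms ks cs : ℕ → ℝ)
    (hm1 : 0 < ms 0) (hm2 : 0 < ms 1) (hk : 0 < ks 0) (hc : 0 ≤ cs 0) :
    ¬ ∃ w : ℂ,
        Polynomial.aeval w (Matrix.charpoly (chainF 2 ms ks cs)) = 0 ∧
        Polynomial.aeval w (adjPoly 2 ms ks cs) = 0 :=
  no_common_root_two_general ms ks cs hm1 hm2 hk
end

section
/- Let N ≥ 2, let m_1, …, m_N > 0 be masses, and let the spring constants k_1, …, k_{N−1} > 0 and dashpot constants c_1, …, c_{N−1} > 0 satisfy the proportionality condition c_1/k_1 = c_2/k_2 = ⋯ = c_{N−1}/k_{N−1}. Then for every index j with 1 ≤ j ≤ N−1, the characteristic polynomial P_N(z) = det(z·I_{2N} − F_N) satisfies P_N(−k_j/c_j) = (k_j/c_j)^{2N}; in particular P_N(−k_j/c_j) ≠ 0. -/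
/-! With proportional damping `C = α K` the state matrix is a linearization of the quadratic
pencil `z² + z C + K = z² + (1 + α z) K`: a Schur complement gives
`det (z - F) = det (z² + z C + K)`. At `z = -1/α` the stiffness term drops out, leaving
`det (z² I_N) = z^{2N}`. -/

open Polynomial

namespace Matrix

variable {n : Type*} [Fintype n] [DecidableEq n] {K : Type*} [Field K]

theorem det_scalar_sub_fromBlocks_companion {t : K} (ht : t ≠ 0) (A B : Matrix n n K) :
    (scalar (n ⊕ n) t - fromBlocks 0 1 (-A) (-B)).det = (scalar n (t ^ 2) + t • B + A).det := by
  simp only [scalar_apply, ← smul_one_eq_diagonal]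
  have hblocks : t • (1 : Matrix (n ⊕ n) (n ⊕ n) K) - fromBlocks 0 1 (-A) (-B) =
      fromBlocks (t • 1) (-1) A (t • 1 + B) := by
    rw [← fromBlocks_one, fromBlocks_smul, sub_eq_add_neg, fromBlocks_neg, fromBlocks_add]
    simp
  let : Invertible (t • 1 : Matrix n n K) := ⟨t⁻¹ • 1, by simp [ht], by simp [ht]⟩
  rw [hblocks, det_fromBlocks₁₁, det_smul, det_one, mul_one, ← det_smul]
  congr 1
  change t • (t • 1 + B - A * (t⁻¹ • 1) * -1) = _
  simp [smul_add, smul_smul, ht, pow_two]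

theorem det_scalar_sub_fromBlocks_companion_smul {α : K} (hα : α ≠ 0) (A : Matrix n n K) :
    (scalar (n ⊕ n) (-α⁻¹) - fromBlocks 0 1 (-A) (-(α • A))).det =
      α⁻¹ ^ (2 * Fintype.card n) := by
  rw [det_scalar_sub_fromBlocks_companion (by simpa using hα), smul_smul, neg_mul,
    inv_mul_cancel₀ hα, neg_one_smul, neg_add_cancel_right, neg_sq, scalar_apply, det_diagonal,
    Finset.prod_const, Finset.card_univ, ← pow_mul]

end Matrix

theorem chainX_eq_smul_of_eq_mul (N : ℕ) (ms ks cs : ℕ → ℝ) (α : ℝ)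
    (h : ∀ i < N - 1, cs i = α * ks i) :
    chainX N ms cs = α • chainX N ms ks := by
  ext i j
  have := i.isLt
  simp only [chainX, Matrix.of_apply, Matrix.smul_apply, smul_eq_mul]
  split_ifs <;> grind

theorem charpoly_eval_neg_ratio_general (N : ℕ) (ms ks cs : ℕ → ℝ)
    (hk : ∀ i < N - 1, 0 < ks i) (hc : ∀ i < N - 1, 0 < cs i)
    (hprop : ∀ i < N - 1, ∀ j < N - 1, cs i / ks i = cs j / ks j) :
    ∀ j < N - 1,
      Polynomial.eval (-(ks j / cs j)) (Matrix.charpoly (chainF N ms ks cs)) =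
          (ks j / cs j) ^ (2 * N) ∧
        Polynomial.eval (-(ks j / cs j)) (Matrix.charpoly (chainF N ms ks cs)) ≠ 0 := by
  intro j hj
  have hdamping : chainX N ms cs = (cs j / ks j) • chainX N ms ks :=
    chainX_eq_smul_of_eq_mul N ms ks cs _ fun i hi =>
      (div_eq_iff (hk i hi).ne').mp (hprop i hi j hj)
  have heval : Polynomial.eval (-(ks j / cs j)) (chainF N ms ks cs).charpoly =
      (ks j / cs j) ^ (2 * N) := by
    rw [Matrix.eval_charpoly, chainF, hdamping, ← inv_div,
      Matrix.det_scalar_sub_fromBlocks_companion_smul (div_pos (hc j hj) (hk j hj)).ne',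
      Fintype.card_fin]
  exact ⟨heval, heval ▸ pow_ne_zero _ (div_pos (hk j hj) (hc j hj)).ne'⟩

/-- **Theorem 5.2, key computation.**  Let `N ≥ 2`, let `m_1, …, m_N > 0` be masses and let
the spring constants `k_1, …, k_{N−1} > 0` and dashpot constants `c_1, …, c_{N−1} > 0`
satisfy `c_1/k_1 = ⋯ = c_{N−1}/k_{N−1}` (0-based: `ms i = m_{i+1}`, `ks i = k_{i+1}`,
`cs i = c_{i+1}`).  Then for every `j` with `1 ≤ j ≤ N−1` (0-based `j < N−1`) the
characteristic polynomial `P_N(z) = det(z·I_{2N} − F_N)` satisfies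
`P_N(−k_j/c_j) = (k_j/c_j)^{2N}`; in particular `P_N(−k_j/c_j) ≠ 0`. -/
theorem charpoly_eval_neg_ratio (N : ℕ) (hN : 2 ≤ N) (ms ks cs : ℕ → ℝ)
    (hm : ∀ i < N, 0 < ms i) (hk : ∀ i < N - 1, 0 < ks i) (hc : ∀ i < N - 1, 0 < cs i)
    (hprop : ∀ i < N - 1, ∀ j < N - 1, cs i / ks i = cs j / ks j) :
    ∀ j < N - 1,
      Polynomial.eval (-(ks j / cs j)) (Matrix.charpoly (chainF N ms ks cs)) =
          (ks j / cs j) ^ (2 * N) ∧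
        Polynomial.eval (-(ks j / cs j)) (Matrix.charpoly (chainF N ms ks cs)) ≠ 0 :=
  charpoly_eval_neg_ratio_general N ms ks cs hk hc hprop
end

section
/- Let N ≥ 2, let m_1, …, m_N > 0 be masses, and let the spring constants k_1, …, k_{N−1} > 0 and dashpot constants c_1, …, c_{N−1} > 0 satisfy the proportionality condition c_1/k_1 = c_2/k_2 = ⋯ = c_{N−1}/k_{N−1}. Then the characteristic polynomial P_N(z) = det(z·I_{2N} − F_N) and the adjoint polynomial Q_N(z) = h_N · adj(z·I_{2N} − F_N) · g_N have no common complex root. -/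
/-!
With `c = a k` the state matrix is the companion matrix `[[0, 1], [-K, -a K]]` of
`ẍ + a K ẋ + K x = 0`, and a kernel vector `(u, v)` of `w - F` has `v = w u` and
`(w² + (1 + a w) K) u = 0`. If `1 + a w = 0` this forces `u = 0`, so `P(w) ≠ 0`. Otherwise
`Q(w)` is, up to `1 / m₁`, the determinant of `w - F` with the first velocity row replaced by
the last position coordinate. A kernel vector of that matrix satisfies all but the first row of
`(w² + (1 + a w) K) u = 0` together with `u_N = 0`; since `K` is tridiagonal with nonzero
subdiagonal, back substitution gives `u = 0`, so `Q(w) ≠ 0`.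
-/

open Polynomial

open Matrix

variable {R : Type*}

theorem Matrix.charmatrix_map_aeval {S n : Type*} [CommRing R] [CommRing S] [Algebra R S]
    [Fintype n] [DecidableEq n] (M : Matrix n n R) (w : S) :
    (charmatrix M).map (aeval w) = scalar n w - M.map (algebraMap R S) := by
  ext i j
  obtain rfl | hij := eq_or_ne i j <;> simp [*]

section Hessenberg

variable {N : ℕ}

def Matrix.IsUnreducedHessenberg [Zero R] (T : Matrix (Fin N) (Fin N) R) : Prop :=
  (∀ i j : Fin N, (j : ℕ) + 1 < i → T i j = 0) ∧ ∀ i j : Fin N, (i : ℕ) = j + 1 → T i j ≠ 0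

theorem Matrix.IsUnreducedHessenberg.map {S : Type*} [Zero R] [Zero S]
    {T : Matrix (Fin N) (Fin N) R} (hT : T.IsUnreducedHessenberg) {f : R → S} (hf0 : f 0 = 0)
    (hf : Function.Injective f) : (T.map f).IsUnreducedHessenberg :=
  ⟨fun i j hij => by simp [hT.1 i j hij, hf0],
    fun i j hij => by simpa [← hf0] using hf.ne (hT.2 i j hij)⟩

theorem Matrix.IsUnreducedHessenberg.smul_add_smul_one [CommRing R] [NoZeroDivisors R]
    {T : Matrix (Fin N) (Fin N) R} (hT : T.IsUnreducedHessenberg) {b : R} (hb : b ≠ 0) (c : R) :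
    (b • T + c • 1).IsUnreducedHessenberg := by
  refine ⟨fun i j hij => ?_, fun i j hij => ?_⟩
  · have hne : i ≠ j := fun h => by subst h; omega
    simp [hT.1 i j hij, one_apply_ne hne]
  · have hne : i ≠ j := fun h => by subst h; omega
    simpa [one_apply_ne hne] using mul_ne_zero hb (hT.2 i j hij)

/-- Back substitution from the last coordinate: in row `j + 1` every entry left of column `j`
vanishes and the coordinates right of `j` are already known to vanish. -/
theorem Matrix.IsUnreducedHessenberg.eq_zero_of_mulVec [Semiring R] [NoZeroDivisors R]
    {T : Matrix (Fin N) (Fin N) R} (hT : T.IsUnreducedHessenberg) {u : Fin N → R}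
    (hrows : ∀ i : Fin N, (i : ℕ) ≠ 0 → (T *ᵥ u) i = 0)
    (hlast : ∀ i : Fin N, (i : ℕ) = N - 1 → u i = 0) : u = 0 := by
  suffices h : ∀ t : ℕ, ∀ j : Fin N, N - 1 ≤ j + t → u j = 0 from
    funext fun j => h N j (by omega)
  intro t
  induction t with
  | zero => exact fun j hj => hlast j (by omega)
  | succ t ih =>
    intro j hj
    by_cases hjt : N - 1 ≤ j + t
    · exact ih j hjt
    let j' : Fin N := ⟨j + 1, by omega⟩
    have hrow : (T *ᵥ u) j' = T j' j * u j := by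
      rw [mulVec, dotProduct]
      refine Finset.sum_eq_single j (fun i _ hij => ?_) (absurd (Finset.mem_univ j))
      rcases lt_or_gt_of_ne (Fin.val_ne_of_ne hij) with hlt | hgt
      · rw [hT.1 j' i (show (i : ℕ) + 1 < j + 1 by omega), zero_mul]
      · rw [ih i (by omega), mul_zero]
    have := hrows j' (by simp [j'])
    rw [hrow] at this
    exact (mul_eq_zero.mp this).resolve_left (hT.2 j' j rfl)

end Hessenberg

section DampedCompanion

variable {n : Type*} [DecidableEq n]

def Matrix.dampedCompanion [Ring R] (K : Matrix n n R) (a : R) : Matrix (n ⊕ n) (n ⊕ n) R :=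
  fromBlocks 0 1 (-K) (-(a • K))

theorem Matrix.dampedCompanion_map {S : Type*} [Ring R] [Ring S] (K : Matrix n n R) (a : R)
    (f : R →+* S) : (K.dampedCompanion a).map f = (K.map f).dampedCompanion (f a) := by
  ext (i | i) (j | j) <;> simp [dampedCompanion, one_apply, apply_ite f]

variable [Fintype n] [CommRing R] (K : Matrix n n R) (a w : R)

theorem Matrix.scalar_sub_dampedCompanion_mulVec (u v : n → R) :
    (scalar (n ⊕ n) w - K.dampedCompanion a) *ᵥ Sum.elim u v =
      Sum.elim (w • u - v) (K *ᵥ u + w • v + a • (K *ᵥ v)) := by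
  ext (i | i)
  · simp [dampedCompanion, sub_mulVec, fromBlocks_mulVec]
  · simp only [scalar_apply, dampedCompanion, sub_mulVec, diagonal_const_mulVec,
      fromBlocks_mulVec, Sum.elim_comp_inl, Sum.elim_comp_inr, zero_mulVec, one_mulVec, zero_add,
      neg_mulVec, smul_mulVec, Pi.add_apply, Pi.sub_apply, Pi.neg_apply, Pi.smul_apply,
      Sum.elim_inr, smul_eq_mul]
    ring

theorem Matrix.scalar_sub_dampedCompanion_mulVec_sumElim_smul (u : n → R) :
    (scalar (n ⊕ n) w - K.dampedCompanion a) *ᵥ Sum.elim u (w • u) =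
      Sum.elim (0 : n → R) (((1 + a * w) • K + w ^ 2 • 1) *ᵥ u) := by
  rw [scalar_sub_dampedCompanion_mulVec, sub_self, add_mulVec, smul_mulVec, smul_mulVec,
    one_mulVec, mulVec_smul, smul_smul]
  congr 1
  ext i
  simp only [Pi.add_apply, Pi.smul_apply, smul_eq_mul]
  ring

theorem Matrix.eq_sumElim_smul_of_scalar_sub_dampedCompanion_mulVec {x : n ⊕ n → R}
    (hx : ∀ i, ((scalar (n ⊕ n) w - K.dampedCompanion a) *ᵥ x) (Sum.inl i) = 0) :
    x = Sum.elim (x ∘ Sum.inl) (w • (x ∘ Sum.inl)) := by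
  have hv : x ∘ Sum.inr = w • (x ∘ Sum.inl) := by
    ext i
    have := hx i
    rw [← Sum.elim_comp_inl_inr x, scalar_sub_dampedCompanion_mulVec] at this
    simp only [Sum.elim_inl, Pi.sub_apply, Pi.smul_apply, smul_eq_mul, Function.comp_apply]
      at this
    simpa using (sub_eq_zero.mp this).symm
  rw [← hv, Sum.elim_comp_inl_inr]

end DampedCompanion

section NoCommonRoot

variable {F : Type*} [Field F]

theorem Matrix.det_scalar_sub_dampedCompanion_ne_zero {n : Type*} [Fintype n] [DecidableEq n]
    (K : Matrix n n F) {a w : F} (h : 1 + a * w = 0) :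
    (scalar (n ⊕ n) w - K.dampedCompanion a).det ≠ 0 := by
  intro hdet
  obtain ⟨x, hx0, hx⟩ := exists_mulVec_eq_zero_iff.mpr hdet
  have hw : w ^ 2 ≠ 0 := pow_ne_zero 2 (by rintro rfl; simp at h)
  have hxu := eq_sumElim_smul_of_scalar_sub_dampedCompanion_mulVec K a w
    fun i => congrFun hx (Sum.inl i)
  rw [hxu, scalar_sub_dampedCompanion_mulVec_sumElim_smul, h, zero_smul, zero_add, smul_mulVec,
    one_mulVec, ← Sum.elim_zero_zero, Sum.elim_eq_iff, smul_eq_zero] at hx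
  have hu : x ∘ Sum.inl = 0 := hx.2.resolve_left hw
  exact hx0 (by rw [hxu, hu, smul_zero, Sum.elim_zero_zero])

theorem Matrix.IsUnreducedHessenberg.adjugate_scalar_sub_dampedCompanion_ne_zero {N : ℕ}
    {K : Matrix (Fin N) (Fin N) F} (hK : K.IsUnreducedHessenberg) {a w : F} (h : 1 + a * w ≠ 0)
    {i₀ j₀ : Fin N} (hi₀ : (i₀ : ℕ) = N - 1) (hj₀ : (j₀ : ℕ) = 0) :
    (scalar _ w - K.dampedCompanion a).adjugate (Sum.inl i₀) (Sum.inr j₀) ≠ 0 := by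
  rw [adjugate_apply]
  intro hdet
  obtain ⟨x, hx0, hx⟩ := exists_mulVec_eq_zero_iff.mpr hdet
  rw [updateRow_mulVec] at hx
  have hxu := eq_sumElim_smul_of_scalar_sub_dampedCompanion_mulVec K a w fun i => by
    simpa using congrFun hx (Sum.inl i)
  have hu : x ∘ Sum.inl = 0 := by
    refine (hK.smul_add_smul_one h (w ^ 2)).eq_zero_of_mulVec (fun i hi => ?_) (fun i hi => ?_)
    · have hij : Sum.inr i ≠ (Sum.inr j₀ : Fin N ⊕ Fin N) := by
        simpa [Fin.ext_iff, hj₀] using hi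
      have := congrFun hx (Sum.inr i)
      rw [Function.update_of_ne hij, hxu, scalar_sub_dampedCompanion_mulVec_sumElim_smul] at this
      simpa using this
    · obtain rfl : i = i₀ := Fin.ext (hi.trans hi₀.symm)
      simpa using congrFun hx (Sum.inr j₀)
  exact hx0 (by rw [hxu, hu, smul_zero, Sum.elim_zero_zero])

end NoCommonRoot

section Chain

variable {N : ℕ} {ms : ℕ → ℝ}

theorem chainX_apply_of_add_one_lt (xs : ℕ → ℝ) {i j : Fin N} (hij : (j : ℕ) + 1 < i) :
    chainX N ms xs i j = 0 := by
  have hne : i ≠ j := fun h => by subst h; omega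
  simp only [chainX, of_apply, if_neg hne, if_neg (show (j : ℕ) ≠ i + 1 by omega),
    if_neg (show (i : ℕ) ≠ j + 1 by omega)]

theorem chainX_apply_of_eq_add_one (xs : ℕ → ℝ) {i j : Fin N} (hij : (i : ℕ) = j + 1) :
    chainX N ms xs i j = -xs j / ms i := by
  have hne : i ≠ j := fun h => by subst h; omega
  simp only [chainX, of_apply, if_neg hne, if_neg (show (j : ℕ) ≠ i + 1 by omega), if_pos hij]

theorem isUnreducedHessenberg_chainX {xs : ℕ → ℝ} (hm : ∀ i < N, ms i ≠ 0)
    (hxs : ∀ i < N - 1, xs i ≠ 0) : (chainX N ms xs).IsUnreducedHessenberg :=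
  ⟨fun _ _ hij => chainX_apply_of_add_one_lt xs hij, fun i j hij => by
    rw [chainX_apply_of_eq_add_one xs hij]
    exact div_ne_zero (neg_ne_zero.mpr (hxs j (by omega))) (hm i i.isLt)⟩

theorem chainX_smul (a : ℝ) (xs : ℕ → ℝ) : chainX N ms (a • xs) = a • chainX N ms xs := by
  ext i j
  simp only [chainX, of_apply, Matrix.smul_apply, Pi.smul_apply, smul_eq_mul]
  split_ifs <;> ring

theorem chainX_congr {xs ys : ℕ → ℝ} (h : ∀ i < N - 1, xs i = ys i) :
    chainX N ms xs = chainX N ms ys := by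
  ext i j
  simp only [chainX, of_apply]
  split_ifs <;> grind

theorem chainX_eq_smul_of_proportional {ks cs : ℕ → ℝ} (hk : ∀ i < N - 1, ks i ≠ 0)
    (hprop : ∀ i < N - 1, ∀ j < N - 1, cs i / ks i = cs j / ks j) :
    ∃ a : ℝ, chainX N ms cs = a • chainX N ms ks := by
  refine ⟨cs 0 / ks 0, ?_⟩
  rw [← chainX_smul]
  refine chainX_congr fun i hi => ?_
  rw [Pi.smul_apply, smul_eq_mul, ← hprop i hi 0 (by omega), div_mul_cancel₀ _ (hk i hi)]

theorem adjPoly_eq_s11 (hN : 0 < N) (ks cs : ℕ → ℝ) :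
    adjPoly N ms ks cs = (charmatrix (chainF N ms ks cs)).adjugate
      (Sum.inl ⟨N - 1, by omega⟩) (Sum.inr ⟨0, hN⟩) * C (1 / ms 0) := by
  rw [adjPoly, Finset.sum_eq_single (Sum.inl ⟨N - 1, by omega⟩),
    Finset.sum_eq_single (Sum.inr ⟨0, hN⟩)]
  · simp [chainH, chainG]
  · rintro (j | j) - hj <;> simp_all [chainG, Fin.ext_iff]
  · simp
  · rintro (i | i) - hi <;> simp_all [chainH, Fin.ext_iff]
  · simp

end Chain

theorem no_common_root_of_proportional_general (N : ℕ) (hN : 2 ≤ N) (ms ks cs : ℕ → ℝ)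
    (hm : ∀ i < N, 0 < ms i) (hk : ∀ i < N - 1, 0 < ks i)
    (hprop : ∀ i < N - 1, ∀ j < N - 1, cs i / ks i = cs j / ks j) :
    ¬ ∃ w : ℂ,
        Polynomial.aeval w (Matrix.charpoly (chainF N ms ks cs)) = 0 ∧
        Polynomial.aeval w (adjPoly N ms ks cs) = 0 := by
  rintro ⟨w, hP, hQ⟩
  have hk₀ : ∀ i < N - 1, ks i ≠ 0 := fun i hi => (hk i hi).ne'
  obtain ⟨a, hCK⟩ := chainX_eq_smul_of_proportional (ms := ms) hk₀ hprop
  set K := (chainX N ms ks).map (algebraMap ℝ ℂ)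
  have hA : (charmatrix (chainF N ms ks cs)).map (aeval w) =
      scalar _ w - K.dampedCompanion (a : ℂ) := by
    rw [charmatrix_map_aeval, chainF, hCK, ← dampedCompanion, dampedCompanion_map]
    rfl
  by_cases ha : 1 + (a : ℂ) * w = 0
  · refine det_scalar_sub_dampedCompanion_ne_zero K ha ?_
    rw [← hA, ← AlgHom.mapMatrix_apply, ← AlgHom.map_det]
    exact hP
  · have hK : K.IsUnreducedHessenberg :=
      (isUnreducedHessenberg_chainX (fun i hi => (hm i hi).ne') hk₀).map (map_zero _)
        (algebraMap ℝ ℂ).injective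
    refine hK.adjugate_scalar_sub_dampedCompanion_ne_zero ha (i₀ := ⟨N - 1, by omega⟩)
      (j₀ := ⟨0, by omega⟩) rfl rfl ?_
    rw [adjPoly_eq_s11 (by omega), map_mul, aeval_C] at hQ
    rw [← hA, ← AlgHom.mapMatrix_apply, ← AlgHom.map_adjugate]
    exact (mul_eq_zero.mp hQ).resolve_right (by simpa using (hm 0 (by omega)).ne')

/-- **Theorem 5.2.**  Let `N ≥ 2`, let `m_1, …, m_N > 0` be masses and let the spring
constants `k_1, …, k_{N−1} > 0` and dashpot constants `c_1, …, c_{N−1} > 0` satisfy the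
proportionality condition `c_1/k_1 = ⋯ = c_{N−1}/k_{N−1}` (0-based: `ms i = m_{i+1}`,
`ks i = k_{i+1}`, `cs i = c_{i+1}`).  Then the characteristic polynomial
`P_N(z) = det(z·I_{2N} − F_N)` and the adjoint polynomial
`Q_N(z) = h_N · adj(z·I_{2N} − F_N) · g_N` have no common complex root. -/
theorem no_common_root_of_proportional (N : ℕ) (hN : 2 ≤ N) (ms ks cs : ℕ → ℝ)
    (hm : ∀ i < N, 0 < ms i) (hk : ∀ i < N - 1, 0 < ks i) (hc : ∀ i < N - 1, 0 < cs i)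
    (hprop : ∀ i < N - 1, ∀ j < N - 1, cs i / ks i = cs j / ks j) :
    ¬ ∃ w : ℂ,
        Polynomial.aeval w (Matrix.charpoly (chainF N ms ks cs)) = 0 ∧
        Polynomial.aeval w (adjPoly N ms ks cs) = 0 :=
  no_common_root_of_proportional_general N hN ms ks cs hm hk hprop
end

section
/- For N = 3, let m_1, m_2, m_3 > 0 be masses and k_1, k_2, c_1, c_2 > 0 spring and dashpot constants, and set z_1 = −k_1/c_1 and z_2 = −k_2/c_2 (the roots of the adjoint polynomial Q_3). Then the characteristic polynomial P_3(z) = det(z·I_6 − F_3) satisfies: P_3(z_1) = 0 if and only if k_1²/c_1² + (k_2 − (k_1/c_1)·c_2)·(1/m_2 + 1/m_3) = 0, and P_3(z_2) = 0 if and only if k_2²/c_2² + (k_1 − (k_2/c_2)·c_1)·(1/m_1 + 1/m_2) = 0. -/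
open Polynomial

/-! For `z ≠ 0` the block `z • 1` of `z • 1 - F_3` is invertible, and its Schur complement gives
`P_3(z) = det (z² • 1 + z • C_3 + K_3) = det (z² • 1 + X(k_1 + z c_1, k_2 + z c_2))`, since `X` is
linear in its parameters. At `z = z_1` the first parameter `k_1 + z c_1` vanishes, so the first mass
decouples and the determinant factors as `z⁴ (z² + (k_2 + z c_2)(1/m_2 + 1/m_3))`; symmetrically
at `z = z_2`. -/

open Matrix

theorem eval_charpoly_fromBlocks_zero_one {K n : Type*} [Field K] [Fintype n] [DecidableEq n]
    (A B : Matrix n n K) {z : K} (hz : z ≠ 0) :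
    (fromBlocks 0 1 (-A) (-B)).charpoly.eval z = (z ^ 2 • (1 : Matrix n n K) + z • B + A).det := by
  have hinv : (z • 1 : Matrix n n K) * z⁻¹ • 1 = 1 := by simp [smul_smul, hz]
  let : Invertible (z • 1 : Matrix n n K) := invertibleOfRightInverse _ _ hinv
  rw [eval_charpoly, scalar_apply, ← smul_one_eq_diagonal, ← fromBlocks_one, fromBlocks_smul,
    sub_eq_add_neg, fromBlocks_neg, fromBlocks_add]
  simp only [smul_zero, neg_zero, add_zero, zero_add, neg_neg]
  rw [det_fromBlocks₁₁, invOf_eq_right_inv hinv, ← det_mul]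
  congr 1
  simp only [Matrix.mul_add, Matrix.smul_mul, Matrix.mul_smul, smul_smul, Matrix.mul_one,
    Matrix.one_mul, Matrix.mul_neg, inv_mul_cancel₀ hz, one_smul, sub_neg_eq_add]
  module

theorem smul_chainX_add_chainX (N : ℕ) (ms ks cs : ℕ → ℝ) (z : ℝ) :
    z • chainX N ms cs + chainX N ms ks = chainX N ms (fun i => ks i + z * cs i) := by
  ext i j
  simp only [chainX, Matrix.add_apply, Matrix.smul_apply, of_apply, smul_eq_mul]
  split_ifs <;> ring

theorem eval_charpoly_chainF (N : ℕ) (ms ks cs : ℕ → ℝ) {z : ℝ} (hz : z ≠ 0) :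
    (chainF N ms ks cs).charpoly.eval z =
      (z ^ 2 • (1 : Matrix (Fin N) (Fin N) ℝ) + chainX N ms (fun i => ks i + z * cs i)).det := by
  rw [chainF, eval_charpoly_fromBlocks_zero_one _ _ hz, add_assoc, smul_chainX_add_chainX]

theorem chainX_three (ms xs : ℕ → ℝ) :
    chainX 3 ms xs =
      !![xs 0 / ms 0, -xs 0 / ms 0, 0;
        -xs 0 / ms 1, (xs 0 + xs 1) / ms 1, -xs 1 / ms 1;
        0, -xs 1 / ms 2, xs 1 / ms 2] := by
  ext i j
  fin_cases i <;> fin_cases j <;> simp [chainX]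

theorem det_smul_one_add_chainX_three (ms xs : ℕ → ℝ) (s : ℝ) :
    (s • (1 : Matrix (Fin 3) (Fin 3) ℝ) + chainX 3 ms xs).det =
      s * (s ^ 2 + s * (xs 0 / ms 0 + (xs 0 + xs 1) / ms 1 + xs 1 / ms 2) +
        xs 0 * xs 1 * (1 / (ms 0 * ms 1) + 1 / (ms 0 * ms 2) + 1 / (ms 1 * ms 2))) := by
  rw [chainX_three, det_fin_three]
  simp only [Matrix.add_apply, Matrix.smul_apply, one_apply, of_apply, cons_val', cons_val_zero,
    cons_val_one, cons_val, cons_val_fin_one, Fin.reduceEq, ↓reduceIte, smul_eq_mul]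
  ring

theorem eval_charpoly_chainF_three_eq_zero_iff_of_left (ms ks cs : ℕ → ℝ) {z : ℝ} (hz : z ≠ 0)
    (h : ks 0 + z * cs 0 = 0) :
    (chainF 3 ms ks cs).charpoly.eval z = 0 ↔
      z ^ 2 + (ks 1 + z * cs 1) * (1 / ms 1 + 1 / ms 2) = 0 := by
  have heval : (chainF 3 ms ks cs).charpoly.eval z =
      (z ^ 2) ^ 2 * (z ^ 2 + (ks 1 + z * cs 1) * (1 / ms 1 + 1 / ms 2)) := by
    rw [eval_charpoly_chainF 3 ms ks cs hz, det_smul_one_add_chainX_three]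
    simp only [h]
    ring
  rw [heval, mul_eq_zero, or_iff_right (pow_ne_zero 2 (pow_ne_zero 2 hz))]

theorem eval_charpoly_chainF_three_eq_zero_iff_of_right (ms ks cs : ℕ → ℝ) {z : ℝ} (hz : z ≠ 0)
    (h : ks 1 + z * cs 1 = 0) :
    (chainF 3 ms ks cs).charpoly.eval z = 0 ↔
      z ^ 2 + (ks 0 + z * cs 0) * (1 / ms 0 + 1 / ms 1) = 0 := by
  have heval : (chainF 3 ms ks cs).charpoly.eval z =
      (z ^ 2) ^ 2 * (z ^ 2 + (ks 0 + z * cs 0) * (1 / ms 0 + 1 / ms 1)) := by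
    rw [eval_charpoly_chainF 3 ms ks cs hz, det_smul_one_add_chainX_three]
    simp only [h]
    ring
  rw [heval, mul_eq_zero, or_iff_right (pow_ne_zero 2 (pow_ne_zero 2 hz))]

theorem charpoly_three_root_iff_general (ms ks cs : ℕ → ℝ)
    (hk1 : 0 < ks 0) (hk2 : 0 < ks 1) (hc1 : 0 < cs 0) (hc2 : 0 < cs 1) :
    (Polynomial.eval (-(ks 0 / cs 0)) (Matrix.charpoly (chainF 3 ms ks cs)) = 0 ↔
        ks 0 ^ 2 / cs 0 ^ 2 + (ks 1 - ks 0 / cs 0 * cs 1) * (1 / ms 1 + 1 / ms 2) = 0) ∧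
      (Polynomial.eval (-(ks 1 / cs 1)) (Matrix.charpoly (chainF 3 ms ks cs)) = 0 ↔
        ks 1 ^ 2 / cs 1 ^ 2 + (ks 0 - ks 1 / cs 1 * cs 0) * (1 / ms 0 + 1 / ms 1) = 0) := by
  have hroot {k c : ℝ} (hc : c ≠ 0) : k + -(k / c) * c = 0 := by
    rw [neg_mul, div_mul_cancel₀ k hc, add_neg_cancel]
  constructor
  · rw [eval_charpoly_chainF_three_eq_zero_iff_of_left ms ks cs
      (neg_ne_zero.2 (div_pos hk1 hc1).ne') (hroot hc1.ne'), neg_sq, div_pow, neg_mul,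
      ← sub_eq_add_neg]
  · rw [eval_charpoly_chainF_three_eq_zero_iff_of_right ms ks cs
      (neg_ne_zero.2 (div_pos hk2 hc2).ne') (hroot hc2.ne'), neg_sq, div_pow, neg_mul,
      ← sub_eq_add_neg]

/-- For `N = 3`, masses `m_1, m_2, m_3 > 0` and positive constants `k_1, k_2, c_1, c_2`
(0-based: `ms 0 = m_1`, …, `ks 0 = k_1`, `ks 1 = k_2`, `cs 0 = c_1`, `cs 1 = c_2`), with
`z_1 = −k_1/c_1` and `z_2 = −k_2/c_2` the roots of the adjoint polynomial `Q_3`, the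
characteristic polynomial `P_3(z) = det(z·I_6 − F_3)` satisfies:
`P_3(z_1) = 0 ↔ k_1²/c_1² + (k_2 − (k_1/c_1)·c_2)·(1/m_2 + 1/m_3) = 0` and
`P_3(z_2) = 0 ↔ k_2²/c_2² + (k_1 − (k_2/c_2)·c_1)·(1/m_1 + 1/m_2) = 0`. -/
theorem charpoly_three_root_iff (ms ks cs : ℕ → ℝ)
    (hm1 : 0 < ms 0) (hm2 : 0 < ms 1) (hm3 : 0 < ms 2)
    (hk1 : 0 < ks 0) (hk2 : 0 < ks 1) (hc1 : 0 < cs 0) (hc2 : 0 < cs 1) :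
    (Polynomial.eval (-(ks 0 / cs 0)) (Matrix.charpoly (chainF 3 ms ks cs)) = 0 ↔
        ks 0 ^ 2 / cs 0 ^ 2 + (ks 1 - ks 0 / cs 0 * cs 1) * (1 / ms 1 + 1 / ms 2) = 0) ∧
      (Polynomial.eval (-(ks 1 / cs 1)) (Matrix.charpoly (chainF 3 ms ks cs)) = 0 ↔
        ks 1 ^ 2 / cs 1 ^ 2 + (ks 0 - ks 1 / cs 1 * cs 0) * (1 / ms 0 + 1 / ms 1) = 0) :=
  charpoly_three_root_iff_general ms ks cs hk1 hk2 hc1 hc2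
end
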